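/- arXiv:math/0301059 — 4 statements merged into one kernel-verified Lean document; each statement's English description precedes it below -/
import Mathlib

section
/- For c ∈ ℝ, c ≠ 0, let h₀ ∈ SL(2,ℂ) be the unipotent matrix with rows (1, c) and (0, 1), and let S₁ ⊂ SL(2,ℂ) be the diagonal subgroup {diag(a,1/a) : a ∈ ℂ*}. Then h₀ S₁ h₀⁻¹ ∩ SU(2) = {±I}, the center of SU(2). -/
/-!
Conjugating `diag(a, a⁻¹)` by `(1, c; 0, 1)` gives the upper triangular matrix
`(a, c (a⁻¹ - a); 0, a⁻¹)`. For an upper triangular unitary `g`, the `(0,0)` entry of `gᴴ g = 1`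
gives `g₀₀ ≠ 0`, and then the `(1,0)` entry `conj g₀₁ · g₀₀ = 0` forces `g₀₁ = 0`.
As `c ≠ 0`, this means `a⁻¹ = a`, i.e. `a = ±1`.
-/

open Matrix

theorem Matrix.unipotent_mul_diagonal_mul_inv {K : Type*} [Field K] (c a : K) :
    !![1, c; 0, 1] * !![a, 0; 0, a⁻¹] * (!![1, c; 0, 1])⁻¹ =
      !![a, c * (a⁻¹ - a); 0, a⁻¹] := by
  rw [inv_eq_right_inv (B := !![1, -c; 0, 1]) (by simp [one_fin_two])]
  simp only [mul_fin_two]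
  congr <;> ring

theorem Matrix.offDiag_eq_zero_of_upperTriangular_mem_unitaryGroup {K : Type*} [Field K]
    [StarRing K] {a b d : K} (h : !![a, b; 0, d] ∈ unitaryGroup (Fin 2) K) : b = 0 := by
  have hstar := mem_unitaryGroup_iff'.mp h
  have h00 : star a * a = 1 := by
    simpa [mul_apply, Fin.sum_univ_two] using congrFun (congrFun hstar 0) 0
  have h10 : star b * a = 0 := by
    simpa [mul_apply, Fin.sum_univ_two] using congrFun (congrFun hstar 1) 0
  simpa using (mul_eq_zero.mp h10).resolve_right (right_ne_zero_of_mul_eq_one h00)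

/-- For real `c ≠ 0` and `h₀ = (1,c;0,1)`, the intersection `h₀ S₁ h₀⁻¹ ∩ SU(2)` is the
center `{±I}` of `SU(2)`. -/
theorem stmt_6 (c : ℝ) (hc : c ≠ 0) :
    {g : Matrix (Fin 2) (Fin 2) ℂ |
        (∃ a : ℂ, a ≠ 0 ∧
          g = !![1, (c : ℂ); 0, 1] * !![a, 0; 0, a⁻¹] * (!![1, (c : ℂ); 0, 1])⁻¹) ∧
        g ∈ Matrix.unitaryGroup (Fin 2) ℂ}
      = {1, -1} := by
  ext g
  simp only [Set.mem_ofPred_eq, Set.mem_insert_iff, Set.mem_singleton_iff,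
    unipotent_mul_diagonal_mul_inv]
  constructor
  · rintro ⟨⟨a, ha, rfl⟩, hu⟩
    have hinv : a⁻¹ = a := by
      simpa [sub_eq_zero, hc] using offDiag_eq_zero_of_upperTriangular_mem_unitaryGroup hu
    rcases inv_eq_self₀.mp hinv with rfl | rfl | rfl
    · right; simp [one_fin_two]
    · exact absurd rfl ha
    · left; simp [one_fin_two]
  · rintro (rfl | rfl)
    · exact ⟨⟨1, one_ne_zero, by simp [one_fin_two]⟩, one_mem _⟩
    · exact ⟨⟨-1, by norm_num, by simp [one_fin_two]⟩, by simp [mem_unitaryGroup_iff]⟩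
end

section
/- For c ∈ ℝ, c ≠ 0, let h₀ ∈ SL(2,ℂ) be the matrix with rows (1, c), (0, 1) and let S₂ ⊂ SL(2,ℂ) be the union of the diagonal matrices diag(a,1/a) and antidiagonal matrices with entries (b, −1/b), a, b ∈ ℂ*. Then h₀ S₂ h₀⁻¹ ∩ SU(2) is a cyclic group of order 4, consisting of ±I and the two matrices ±(1/√(1+c²))·M where M has rows (ic, i) and (i, −ic). -/
/-!
Conjugating by `h₀ = !![1, c; 0, 1]` sends `diag(a, a⁻¹)` to `!![a, c (a⁻¹ - a); 0, a⁻¹]` and the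
antidiagonal matrix with entries `a, -a⁻¹` to `!![-c a⁻¹, c² a⁻¹ + a; -a⁻¹, c a⁻¹]`. For a unitary
matrix the two rows are orthogonal; since `c` is real and nonzero, this forces `a² = 1` in the first
case and `a² = -(1 + c²)` in the second. Hence the intersection is `{±1, ±M}`, where `M` is the
conjugate for `a = i √(1 + c²)`; as `M² = -1`, it is cyclic of order 4, generated by `M`.
-/

open Complex Matrix

theorem orderOf_eq_four_of_sq_eq_neg_one {R : Type*} [Ring R] {x : R} (hx : x ^ 2 = -1)
    (h : (-1 : R) ≠ 1) : orderOf x = 4 :=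
  orderOf_eq_prime_pow (p := 2) (n := 1) (by simpa [hx])
    (show x ^ (2 * 2) = 1 by rw [pow_mul, hx]; simp)

theorem setOf_exists_eq_pow_of_sq_eq_neg_one {R : Type*} [Ring R] {x : R} (hx : x ^ 2 = -1) :
    {y | ∃ k : ℕ, y = x ^ k} = {1, -1, x, -x} := by
  have h4 : x ^ 4 = 1 := by rw [show 4 = 2 * 2 from rfl, pow_mul, hx]; simp
  ext y
  simp only [Set.mem_ofPred_eq, Set.mem_insert_iff, Set.mem_singleton_iff]
  constructor
  · rintro ⟨k, rfl⟩
    rw [← Nat.div_add_mod k 4, pow_add, pow_mul, h4, one_pow, one_mul]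
    have : k % 4 < 4 := Nat.mod_lt _ (by norm_num)
    interval_cases k % 4 <;> simp [pow_succ, hx]
  · rintro (rfl | rfl | rfl | rfl)
    exacts [⟨0, (pow_zero _).symm⟩, ⟨2, hx.symm⟩, ⟨1, (pow_one _).symm⟩,
      ⟨3, by rw [pow_succ, hx]; simp⟩]

theorem Matrix.fin_two_rows_orthogonal {R : Type*} [CommRing R] [StarRing R] {p q r s : R}
    (h : !![p, q; r, s] ∈ unitaryGroup (Fin 2) R) : r * star p + s * star q = 0 := by
  simpa [mul_apply] using congrFun (congrFun (mem_unitaryGroup_iff.mp h) 1) 0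

section Conjugation

variable {K : Type*} [Field K] (c : K)

theorem Matrix.inv_unipotent : (!![1, c; 0, 1])⁻¹ = !![1, -c; 0, 1] :=
  inv_eq_right_inv (by simp [one_fin_two])

theorem conj_unipotent_diagonal (a : K) :
    !![1, c; 0, 1] * !![a, 0; 0, a⁻¹] * (!![1, c; 0, 1])⁻¹ = !![a, c * (a⁻¹ - a); 0, a⁻¹] := by
  rw [Matrix.inv_unipotent]; simp; ring

theorem conj_unipotent_antidiagonal (a : K) :
    !![1, c; 0, 1] * !![0, a; -a⁻¹, 0] * (!![1, c; 0, 1])⁻¹ =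
      !![-(c * a⁻¹), c ^ 2 * a⁻¹ + a; -a⁻¹, c * a⁻¹] := by
  rw [Matrix.inv_unipotent]; simp; ring_nf; simp

theorem conj_unipotent_antidiagonal_neg (a : K) :
    !![1, c; 0, 1] * !![0, -a; -(-a)⁻¹, 0] * (!![1, c; 0, 1])⁻¹ =
      -(!![1, c; 0, 1] * !![0, a; -a⁻¹, 0] * (!![1, c; 0, 1])⁻¹) := by
  rw [← neg_mul, ← mul_neg]; simp [inv_neg]

theorem conj_unipotent_diagonal_one :
    !![1, c; 0, 1] * !![1, 0; 0, 1⁻¹] * (!![1, c; 0, 1])⁻¹ = 1 := by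
  rw [conj_unipotent_diagonal]; simp [one_fin_two]

theorem conj_unipotent_diagonal_neg_one :
    !![1, c; 0, 1] * !![-1, 0; 0, (-1)⁻¹] * (!![1, c; 0, 1])⁻¹ = -1 := by
  rw [conj_unipotent_diagonal]; simp [one_fin_two]

end Conjugation

theorem ofReal_sqrt_one_add_sq_sq (c : ℝ) : ((√(1 + c ^ 2) : ℝ) : ℂ) ^ 2 = 1 + c ^ 2 := by
  rw [← ofReal_pow, Real.sq_sqrt (by positivity)]; push_cast; ring

theorem ofReal_sqrt_one_add_sq_ne_zero (c : ℝ) : ((√(1 + c ^ 2) : ℝ) : ℂ) ≠ 0 :=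
  ofReal_ne_zero.mpr (Real.sqrt_pos.mpr (by positivity)).ne'

noncomputable def quarterTurn (c : ℝ) : Matrix (Fin 2) (Fin 2) ℂ :=
  ((1 / Real.sqrt (1 + c ^ 2) : ℝ) : ℂ) • !![I * c, I; I, -(I * c)]

theorem quarterTurn_sq (c : ℝ) : quarterTurn c ^ 2 = -1 := by
  have hT := ofReal_sqrt_one_add_sq_sq c
  have hT0 := ofReal_sqrt_one_add_sq_ne_zero c
  rw [sq]
  ext i j; fin_cases i <;> fin_cases j <;> simp [quarterTurn, mul_apply]
  all_goals first | ring1 | (field_simp; linear_combination (1 + (c : ℂ) ^ 2) * I_sq + hT)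

theorem star_quarterTurn (c : ℝ) : star (quarterTurn c) = -quarterTurn c := by
  ext i j; fin_cases i <;> fin_cases j <;> simp [quarterTurn]

theorem quarterTurn_mem_unitaryGroup (c : ℝ) : quarterTurn c ∈ unitaryGroup (Fin 2) ℂ := by
  rw [mem_unitaryGroup_iff, star_quarterTurn, mul_neg, ← sq, quarterTurn_sq, neg_neg]

theorem conj_unipotent_antidiagonal_I_mul_sqrt (c : ℝ) :
    !![1, (c : ℂ); 0, 1] * !![0, I * √(1 + c ^ 2); -(I * √(1 + c ^ 2))⁻¹, 0] *
      (!![1, (c : ℂ); 0, 1])⁻¹ = quarterTurn c := by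
  have hT := ofReal_sqrt_one_add_sq_sq c
  have hT0 := ofReal_sqrt_one_add_sq_ne_zero c
  rw [conj_unipotent_antidiagonal]
  ext i j; fin_cases i <;> fin_cases j <;> simp [quarterTurn]
  all_goals first | ring1 | (field_simp; linear_combination -(1 + (c : ℂ) ^ 2) * I_sq) |
    (field_simp; linear_combination hT)

theorem eq_one_or_eq_neg_one_of_conj_diagonal_mem_unitaryGroup {c : ℝ} (hc : c ≠ 0) {a : ℂ}
    (ha : a ≠ 0)
    (hu : !![1, (c : ℂ); 0, 1] * !![a, 0; 0, a⁻¹] * (!![1, (c : ℂ); 0, 1])⁻¹ ∈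
      unitaryGroup (Fin 2) ℂ) : a = 1 ∨ a = -1 := by
  rw [conj_unipotent_diagonal] at hu
  have h := fin_two_rows_orthogonal hu
  simp only [RCLike.star_def, zero_mul, star_mul', conj_ofReal, star_sub, star_inv₀, zero_add,
    mul_eq_zero, inv_eq_zero, ha, ofReal_eq_zero, hc, false_or] at h
  have hinv : a⁻¹ = a := by simpa [sub_eq_zero] using congrArg (starRingEnd ℂ) h
  apply sq_eq_one_iff.mp
  rw [sq]; nth_rewrite 1 [← hinv]; exact inv_mul_cancel₀ ha

theorem eq_or_eq_neg_of_conj_antidiagonal_mem_unitaryGroup {c : ℝ} (hc : c ≠ 0) {a : ℂ}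
    (ha : a ≠ 0)
    (hu : !![1, (c : ℂ); 0, 1] * !![0, a; -a⁻¹, 0] * (!![1, (c : ℂ); 0, 1])⁻¹ ∈
      unitaryGroup (Fin 2) ℂ) : a = I * √(1 + c ^ 2) ∨ a = -(I * √(1 + c ^ 2)) := by
  rw [conj_unipotent_antidiagonal] at hu
  have h := fin_two_rows_orthogonal hu
  simp only [star_neg, star_mul', RCLike.star_def, conj_ofReal, star_inv₀, mul_neg, neg_mul,
    neg_neg, star_add, star_pow] at h
  have hconj : (starRingEnd ℂ) a ^ 2 = -(1 + c ^ 2) := by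
    have ha' : (starRingEnd ℂ) a ≠ 0 := by simpa using ha
    field_simp at h
    linear_combination (mul_eq_zero.mp (h.trans (mul_zero _))).resolve_left (ofReal_ne_zero.mpr hc)
  have ha2 : a ^ 2 = -(1 + c ^ 2) := by simpa using congrArg (starRingEnd ℂ) hconj
  apply sq_eq_sq_iff_eq_or_eq_neg.mp
  rw [ha2, mul_pow, I_sq, ofReal_sqrt_one_add_sq_sq]; ring

def conjugateS₂ (c : ℝ) : Set (Matrix (Fin 2) (Fin 2) ℂ) :=
  {g | ∃ a : ℂ, a ≠ 0 ∧
    (g = !![1, (c : ℂ); 0, 1] * !![a, 0; 0, a⁻¹] * (!![1, (c : ℂ); 0, 1])⁻¹ ∨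
     g = !![1, (c : ℂ); 0, 1] * !![0, a; -a⁻¹, 0] * (!![1, (c : ℂ); 0, 1])⁻¹)}

theorem conjugateS₂_inter_unitaryGroup_subset {c : ℝ} (hc : c ≠ 0) :
    conjugateS₂ c ∩ unitaryGroup (Fin 2) ℂ ⊆ {1, -1, quarterTurn c, -quarterTurn c} := by
  rintro g ⟨⟨a, ha, rfl | rfl⟩, hu⟩
  · rcases eq_one_or_eq_neg_one_of_conj_diagonal_mem_unitaryGroup hc ha hu with rfl | rfl
    · exact .inl (conj_unipotent_diagonal_one _)
    · exact .inr (.inl (conj_unipotent_diagonal_neg_one _))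
  · rcases eq_or_eq_neg_of_conj_antidiagonal_mem_unitaryGroup hc ha hu with rfl | rfl
    · exact .inr (.inr (.inl (conj_unipotent_antidiagonal_I_mul_sqrt c)))
    · refine .inr (.inr (.inr ?_))
      rw [conj_unipotent_antidiagonal_neg, conj_unipotent_antidiagonal_I_mul_sqrt]
      rfl

theorem subset_conjugateS₂_inter_unitaryGroup (c : ℝ) :
    {1, -1, quarterTurn c, -quarterTurn c} ⊆ conjugateS₂ c ∩ unitaryGroup (Fin 2) ℂ := by
  have hIT : I * √(1 + c ^ 2) ≠ 0 := mul_ne_zero I_ne_zero (ofReal_sqrt_one_add_sq_ne_zero c)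
  rintro g (rfl | rfl | rfl | rfl)
  · exact ⟨⟨1, one_ne_zero, .inl (conj_unipotent_diagonal_one _).symm⟩, one_mem _⟩
  · exact ⟨⟨-1, by norm_num, .inl (conj_unipotent_diagonal_neg_one _).symm⟩,
      by simp [mem_unitaryGroup_iff]⟩
  · exact ⟨⟨_, hIT, .inr (conj_unipotent_antidiagonal_I_mul_sqrt c).symm⟩,
      quarterTurn_mem_unitaryGroup c⟩
  · refine ⟨⟨_, neg_ne_zero.mpr hIT, .inr ?_⟩,
      by simpa [mem_unitaryGroup_iff] using quarterTurn_mem_unitaryGroup c⟩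
    rw [conj_unipotent_antidiagonal_neg, conj_unipotent_antidiagonal_I_mul_sqrt]

/-- For real `c ≠ 0` and `h₀ = (1,c;0,1)`, the intersection `h₀ S₂ h₀⁻¹ ∩ SU(2)` is a cyclic
group of order 4, consisting of `±I` and `±(1/√(1+c²))·(ic, i; i, -ic)`. -/
theorem stmt_7 (c : ℝ) (hc : c ≠ 0) :
    let M : Matrix (Fin 2) (Fin 2) ℂ :=
      ((1 / Real.sqrt (1 + c ^ 2) : ℝ) : ℂ) •
        !![Complex.I * (c : ℂ), Complex.I; Complex.I, -(Complex.I * (c : ℂ))]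
    let S : Set (Matrix (Fin 2) (Fin 2) ℂ) :=
      {g | (∃ a : ℂ, a ≠ 0 ∧
              (g = !![1, (c : ℂ); 0, 1] * !![a, 0; 0, a⁻¹] * (!![1, (c : ℂ); 0, 1])⁻¹ ∨
               g = !![1, (c : ℂ); 0, 1] * !![0, a; -a⁻¹, 0] * (!![1, (c : ℂ); 0, 1])⁻¹)) ∧
           g ∈ Matrix.unitaryGroup (Fin 2) ℂ}
    S = {1, -1, M, -M} ∧ ∃ x ∈ S, orderOf x = 4 ∧ S = {y | ∃ k : ℕ, y = x ^ k} := by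
  intro M S
  have hS : S = {1, -1, M, -M} :=
    (conjugateS₂_inter_unitaryGroup_subset hc).antisymm (subset_conjugateS₂_inter_unitaryGroup c)
  have hM : M ^ 2 = -1 := quarterTurn_sq c
  have h1 : (-1 : Matrix (Fin 2) (Fin 2) ℂ) ≠ 1 := fun h => by
    have := congrFun (congrFun h 0) 0
    norm_num at this
  refine ⟨hS, M, hS ▸ .inr (.inr (.inl rfl)), orderOf_eq_four_of_sq_eq_neg_one hM h1, ?_⟩
  rw [hS, setOf_exists_eq_pow_of_sq_eq_neg_one hM]
end

section
/- The map π : ℂℙ² \ {(1:0:0)} → ℂℙ³ defined by w₀=z₀², w₁=z₁²−(z₁z̄₂/(|z₁|²+|z₂|²))z₀², w₂=z₂²+(z̄₁z₂/(|z₁|²+|z₂|²))z₀², w₃=z₁z₂−(|z₂|²/(|z₁|²+|z₂|²))z₀² satisfies π(x) = π(y) if and only if the homogeneous coordinate vectors of x and y are proportional up to sign, i.e., π is everywhere 2-to-1. -/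
/-!
The map `π` sends the line of `ℂℙ²` through `(1:0:0)` and `(0:b:c)` into the line of `ℂℙ³` cut
out by `c w₁ = b w₃` and `b w₂ = c (w₃ + w₀)`, and these lines are pairwise disjoint for
non-proportional `(b, c)`. Hence `π(z)` determines `(z₁ : z₂)`, and after rescaling (`π` is
homogeneous of degree 2) we may assume `z'₁ = z₁`, `z'₂ = z₂`. Comparing `w₁` or `w₂` then shows
that the proportionality factor is `1`, and `w₀ = z₀²` determines `z₀` up to sign.
-/

open Complex

/-- The lift of Rossi's map `π : ℂℙ² \ {(1:0:0)} → ℂℙ³` on homogeneous coordinates. -/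
noncomputable def rossiPi (z : Fin 3 → ℂ) : Fin 4 → ℂ :=
  ![z 0 ^ 2,
    z 1 ^ 2 - (z 1 * (starRingEnd ℂ) (z 2) / ((normSq (z 1) : ℂ) + (normSq (z 2) : ℂ))) * z 0 ^ 2,
    z 2 ^ 2 + ((starRingEnd ℂ) (z 1) * z 2 / ((normSq (z 1) : ℂ) + (normSq (z 2) : ℂ))) * z 0 ^ 2,
    z 1 * z 2 - ((normSq (z 2) : ℂ) / ((normSq (z 1) : ℂ) + (normSq (z 2) : ℂ))) * z 0 ^ 2]

open ComplexConjugate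

section RossiLine

variable {R : Type*} [CommRing R]

def rossiLine (b c : R) : Submodule R (Fin 4 → R) where
  carrier := {w | c * w 1 = b * w 3 ∧ b * w 2 = c * (w 3 + w 0)}
  add_mem' := by
    rintro v w ⟨hv₁, hv₂⟩ ⟨hw₁, hw₂⟩
    constructor <;> simp only [Pi.add_apply]
    · linear_combination hv₁ + hw₁
    · linear_combination hv₂ + hw₂
  zero_mem' := by simp
  smul_mem' := by
    rintro k w ⟨hw₁, hw₂⟩
    constructor <;> simp only [Pi.smul_apply, smul_eq_mul]
    · linear_combination k * hw₁
    · linear_combination k * hw₂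

theorem mul_sub_mul_smul_eq_zero_of_mem_rossiLine {b c b' c' : R} {w : Fin 4 → R}
    (hw : w ∈ rossiLine b c) (hw' : w ∈ rossiLine b' c') : (b * c' - b' * c) • w = 0 := by
  obtain ⟨h₁, h₂⟩ := hw
  obtain ⟨h₁', h₂'⟩ := hw'
  ext i; fin_cases i <;> simp only [Fin.reduceFinMk, Pi.smul_apply, smul_eq_mul, Pi.zero_apply]
  · linear_combination b' * h₂ - b * h₂' - c * h₁' + c' * h₁
  · linear_combination b * h₁' - b' * h₁
  · linear_combination c' * h₂ - c * h₂'
  · linear_combination c * h₁' - c' * h₁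

end RossiLine

theorem exists_eq_mul_of_mul_sub_mul_eq_zero {K : Type*} [Field K] {b c b' c' : K}
    (hbc : b ≠ 0 ∨ c ≠ 0) (h : b * c' - b' * c = 0) : ∃ t, b' = t * b ∧ c' = t * c := by
  rcases hbc with hb | hc
  · refine ⟨b' / b, by field_simp, ?_⟩
    field_simp
    linear_combination h
  · refine ⟨c' / c, ?_, by field_simp⟩
    field_simp
    linear_combination -h

theorem ne_zero_or_ne_zero_of_normSq_add_eq_one {a b : ℂ} (h : normSq a + normSq b = 1) :
    a ≠ 0 ∨ b ≠ 0 := by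
  by_contra! hab
  simp [hab.1, hab.2] at h

theorem rossiPi_smul (c : ℂ) (z : Fin 3 → ℂ) : rossiPi (c • z) = c ^ 2 • rossiPi z := by
  rcases eq_or_ne c 0 with rfl | hc
  · ext i; fin_cases i <;> simp [rossiPi]
  have hc' : conj c ≠ 0 := (map_ne_zero _).2 hc
  ext i; fin_cases i <;>
    simp only [rossiPi, Fin.zero_eta, Fin.mk_one, Fin.reduceFinMk, Matrix.cons_val,
      Matrix.cons_val_zero, Matrix.cons_val_one, Pi.smul_apply, smul_eq_mul, map_mul,
      ofReal_mul, ← mul_conj c, ← mul_add] <;>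
    field_simp

theorem rossiPi_neg_tail (z : Fin 3 → ℂ) : rossiPi ![z 0, -z 1, -z 2] = rossiPi z := by
  ext i; fin_cases i <;> simp [rossiPi]

theorem rossiPi_eq_zero_iff {z : Fin 3 → ℂ} : rossiPi z = 0 ↔ z = 0 := by
  refine ⟨fun h => ?_, fun h => by ext i; fin_cases i <;> simp [rossiPi, h]⟩
  have h0 : z 0 = 0 := by simpa [rossiPi] using congrFun h 0
  have h1 : z 1 = 0 := by simpa [rossiPi, h0] using congrFun h 1
  have h2 : z 2 = 0 := by simpa [rossiPi, h0] using congrFun h 2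
  ext i; fin_cases i <;> assumption

theorem rossiPi_mem_rossiLine (z : Fin 3 → ℂ) : rossiPi z ∈ rossiLine (z 1) (z 2) := by
  rcases eq_or_ne (normSq (z 1) + normSq (z 2)) 0 with hD | hD
  · rw [add_eq_zero_iff_of_nonneg (normSq_nonneg _) (normSq_nonneg _), normSq_eq_zero,
      normSq_eq_zero] at hD
    simp [rossiLine, hD]
  have hD' : z 1 * conj (z 1) + z 2 * conj (z 2) ≠ 0 := by
    rwa [mul_conj, mul_conj, ← ofReal_add, ofReal_ne_zero]
  constructor
  · simp only [rossiPi, ← mul_conj, Matrix.cons_val, Matrix.cons_val_zero, Matrix.cons_val_one]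
    field_simp
  · simp only [rossiPi, ← mul_conj, Matrix.cons_val, Matrix.cons_val_zero]
    field_simp
    ring

theorem eq_or_eq_neg_of_rossiPi_eq_smul {z z' : Fin 3 → ℂ} (h₁ : z' 1 = z 1) (h₂ : z' 2 = z 2)
    (hne : z 1 ≠ 0 ∨ z 2 ≠ 0) {ν : ℂ} (h : rossiPi z' = ν • rossiPi z) :
    z' = z ∨ z' = -![z 0, -z 1, -z 2] := by
  have e₀ := congrFun h 0
  have e₁ := congrFun h 1
  have e₂ := congrFun h 2
  simp only [rossiPi, h₁, h₂, Pi.smul_apply, smul_eq_mul, Matrix.cons_val] at e₀ e₁ e₂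
  set p := z 1 * conj (z 2) / ((normSq (z 1) : ℂ) + normSq (z 2))
  set q := conj (z 1) * z 2 / ((normSq (z 1) : ℂ) + normSq (z 2))
  have hν : ν = 1 := by
    rcases hne with hb | hc
    · refine mul_right_cancel₀ (pow_ne_zero 2 hb) ?_
      linear_combination -e₁ - p * e₀
    · refine mul_right_cancel₀ (pow_ne_zero 2 hc) ?_
      linear_combination -e₂ + q * e₀
  rw [hν, one_mul] at e₀
  rcases sq_eq_sq_iff_eq_or_eq_neg.1 e₀ with h₀ | h₀
  · left
    ext i; fin_cases i <;> assumption
  · right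
    ext i; fin_cases i <;> simp [h₀, h₁, h₂]

/-- Rossi's map `π` is everywhere 2-to-1: for normalized homogeneous lifts `z, z'`
(`|z₁|² + |z₂|² = 1`), the images `π(z)` and `π(z')` agree as projective points if and only
if the points of `ℂℙ²` represented by `z` and `z'` are equal up to the sign involution
`(z₀ : z₁ : z₂) ↦ (z₀ : -z₁ : -z₂)`. -/
theorem stmt_11 (z z' : Fin 3 → ℂ)
    (hz : normSq (z 1) + normSq (z 2) = 1) (hz' : normSq (z' 1) + normSq (z' 2) = 1) :
    (∃ μ : ℂ, μ ≠ 0 ∧ rossiPi z' = μ • rossiPi z)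
      ↔ (∃ lam : ℂ, lam ≠ 0 ∧
          (z' = lam • z ∨ z' = lam • ![z 0, -z 1, -z 2])) := by
  constructor
  · rintro ⟨μ, hμ, h⟩
    have hw : rossiPi z ∈ rossiLine (z' 1) (z' 2) :=
      (Submodule.smul_mem_iff _ hμ).1 (h ▸ rossiPi_mem_rossiLine z')
    have hbc := ne_zero_or_ne_zero_of_normSq_add_eq_one hz
    have hz₀ : z ≠ 0 := by rintro rfl; simp at hz
    have hδ : z 1 * z' 2 - z' 1 * z 2 = 0 :=
      (smul_eq_zero.1 (mul_sub_mul_smul_eq_zero_of_mem_rossiLine (rossiPi_mem_rossiLine z) hw)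
        ).resolve_right (rossiPi_eq_zero_iff.not.2 hz₀)
    obtain ⟨t, ht₁, ht₂⟩ := exists_eq_mul_of_mul_sub_mul_eq_zero hbc hδ
    have ht : t ≠ 0 := by
      rintro rfl
      simp [ht₁, ht₂] at hz'
    have hu : rossiPi (t⁻¹ • z') = (t⁻¹ ^ 2 * μ) • rossiPi z := by
      rw [rossiPi_smul, h, smul_smul]
    rcases eq_or_eq_neg_of_rossiPi_eq_smul (by simp [ht₁, ht]) (by simp [ht₂, ht]) hbc hu
      with hu | hu
    · exact ⟨t, ht, Or.inl (by rw [← hu, smul_inv_smul₀ ht])⟩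
    · refine ⟨-t, neg_ne_zero.2 ht, Or.inr ?_⟩
      rw [neg_smul, ← smul_neg, ← hu, smul_inv_smul₀ ht]
  · rintro ⟨lam, hlam, rfl | rfl⟩
    · exact ⟨lam ^ 2, pow_ne_zero 2 hlam, rossiPi_smul lam z⟩
    · exact ⟨lam ^ 2, pow_ne_zero 2 hlam, by rw [rossiPi_smul, rossiPi_neg_tail]⟩
end

section
/- Let n ≥ 2 and let 𝔤 be the Lie subalgebra of 𝔰𝔩(n,ℂ) of matrices with first column (−tr α, 0, …, 0)ᵀ, first row (−tr α, β) with β ∈ ℂ^{n-1}, and lower-right (n−1)×(n−1) block α ∈ 𝔤𝔩(n−1,ℂ). If 𝔥 ⊂ 𝔤 is a complex Lie subalgebra of complex codimension 1 that is an ideal of 𝔤, then 𝔥 equals the subalgebra where α is additionally required to be traceless (α ∈ 𝔰𝔩(n−1,ℂ)). -/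
/-!
Since `𝔥` is an ideal of codimension one, `𝔤 / 𝔥` is one-dimensional, hence abelian, so `𝔥`
contains every bracket `⁅x, y⁆` with `x, y ∈ 𝔤`. These brackets span the hyperplane
`{x ∈ 𝔤 | x₀₀ = 0}`: for `j ≠ 0` the matrix unit `E_ij` is an eigenvector of `ad (E_ii - E_jj)`
with eigenvalue `2`, and `E_ii - E_jj = ⁅E_ij, E_ji⁆` for `i, j ≠ 0`. A proper subspace of `𝔤`
containing this hyperplane equals it, and for traceless `x` the condition `x₀₀ = 0` says `tr α = 0`.
-/

/-- The parabolic subalgebra `𝔤 ⊂ 𝔰𝔩(n+1,ℂ)` of traceless matrices whose first column is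
`(-tr α, 0, …, 0)ᵀ` (first row `(-tr α, β)`, lower-right block `α ∈ 𝔤𝔩(n,ℂ)`), viewed as a
`ℂ`-submodule of the matrix algebra. -/
noncomputable def parSub (n : ℕ) : Submodule ℂ (Matrix (Fin (n + 1)) (Fin (n + 1)) ℂ) where
  carrier := {x | x.trace = 0 ∧ ∀ i, i ≠ 0 → x i 0 = 0}
  add_mem' := fun ha hb =>
    ⟨by simp [Matrix.trace_add, ha.1, hb.1],
     fun i hi => by simp [Matrix.add_apply, ha.2 i hi, hb.2 i hi]⟩
  zero_mem' := ⟨by simp, fun i _ => rfl⟩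
  smul_mem' := fun c x hx =>
    ⟨by simp [Matrix.trace_smul, hx.1], fun i hi => by simp [Matrix.smul_apply, hx.2 i hi]⟩

open Module Matrix

namespace Submodule

variable {K V : Type*} [DivisionRing K] [AddCommGroup V] [Module K V]

theorem sup_span_singleton_eq_of_finrank_eq_succ [FiniteDimensional K V] {𝔥 𝔤 : Submodule K V}
    (hle : 𝔥 ≤ 𝔤) (hcodim : finrank K 𝔤 = finrank K 𝔥 + 1) {z : V} (hz𝔤 : z ∈ 𝔤)
    (hz𝔥 : z ∉ 𝔥) : 𝔥 ⊔ K ∙ z = 𝔤 :=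
  eq_of_le_of_finrank_le (sup_le hle ((span_singleton_le_iff_mem _ _).2 hz𝔤))
    (by rw [finrank_sup_span_singleton hz𝔥, hcodim])

theorem eq_inf_ker_of_inf_ker_le {𝔥 𝔤 : Submodule K V} (f : V →ₗ[K] K) (hle : 𝔥 ≤ 𝔤)
    (hne : 𝔥 ≠ 𝔤) (hker : 𝔤 ⊓ LinearMap.ker f ≤ 𝔥) : 𝔥 = 𝔤 ⊓ LinearMap.ker f := by
  refine le_antisymm (le_inf hle fun w hw => ?_) hker
  by_contra hfw
  refine hne (le_antisymm hle fun x hx => ?_)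
  have hrest : x - (f x / f w) • w ∈ 𝔥 :=
    hker ⟨sub_mem hx (smul_mem _ _ (hle hw)), by simp [div_mul_cancel₀ _ hfw]⟩
  simpa using add_mem hrest (smul_mem _ (f x / f w) hw)

end Submodule

section Bracket

variable {K L : Type*} [Field K] [LieRing L] [LieAlgebra K L]

def commutatorSpan (𝔤 : Submodule K L) : Submodule K L :=
  Submodule.span K {z | ∃ x ∈ 𝔤, ∃ y ∈ 𝔤, ⁅x, y⁆ = z}

theorem lie_mem_commutatorSpan {𝔤 : Submodule K L} {x y : L} (hx : x ∈ 𝔤) (hy : y ∈ 𝔤) :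
    ⁅x, y⁆ ∈ commutatorSpan 𝔤 :=
  Submodule.subset_span ⟨x, hx, y, hy, rfl⟩

theorem commutatorSpan_le_of_finrank_eq_succ [FiniteDimensional K L] {𝔥 𝔤 : Submodule K L}
    (hle : 𝔥 ≤ 𝔤) (hideal : ∀ x ∈ 𝔤, ∀ y ∈ 𝔥, ⁅x, y⁆ ∈ 𝔥)
    (hcodim : finrank K 𝔤 = finrank K 𝔥 + 1) : commutatorSpan 𝔤 ≤ 𝔥 := by
  obtain ⟨z, hz𝔤, hz𝔥⟩ : ∃ z ∈ 𝔤, z ∉ 𝔥 := by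
    by_contra! h
    rw [le_antisymm hle h] at hcodim
    omega
  have hsup := Submodule.sup_span_singleton_eq_of_finrank_eq_succ hle hcodim hz𝔤 hz𝔥
  have hdecomp : ∀ y ∈ 𝔤, ∃ h ∈ 𝔥, ∃ c : K, y = h + c • z := by
    intro y hy
    rw [← hsup] at hy
    obtain ⟨h, hh, w, hw, rfl⟩ := Submodule.mem_sup.mp hy
    obtain ⟨c, rfl⟩ := Submodule.mem_span_singleton.mp hw
    exact ⟨h, hh, c, rfl⟩
  have hz : ∀ y ∈ 𝔤, ⁅z, y⁆ ∈ 𝔥 := by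
    intro y hy
    obtain ⟨h, hh, c, rfl⟩ := hdecomp y hy
    rw [lie_add, lie_smul, lie_self, smul_zero, add_zero]
    exact hideal z hz𝔤 h hh
  refine Submodule.span_le.mpr ?_
  rintro _ ⟨x, hx, y, hy, rfl⟩
  obtain ⟨h, hh, c, rfl⟩ := hdecomp y hy
  rw [lie_add, lie_smul, ← lie_skew x z]
  exact add_mem (hideal x hx h hh) (Submodule.smul_mem _ _ (neg_mem (hz x hx)))

end Bracket

attribute [local instance] LieRing.ofAssociativeRing

namespace Matrix

variable {m R : Type*} [Fintype m] [DecidableEq m]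

theorem trace_eq_add_trace_submatrix_succ [AddCommMonoid R] {n : ℕ}
    (x : Matrix (Fin (n + 1)) (Fin (n + 1)) R) :
    x.trace = x 0 0 + (x.submatrix Fin.succ Fin.succ).trace := by
  simp [Matrix.trace, Fin.sum_univ_succ]

variable [Ring R]

theorem lie_single_sub_single_single {i j : m} (hij : i ≠ j) (c : R) :
    ⁅single i i (1 : R) - single j j 1, single i j c⁆ = (2 : R) • single i j c := by
  simp [Ring.lie_def, sub_mul, mul_sub, single_mul_single_same, hij.symm, two_smul]

theorem lie_single_single (i j : m) (c : R) :
    ⁅single i j (1 : R), single j i c⁆ = single i i c - single j j c := by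
  by_cases hij : i = j
  · subst hij
    simp [Ring.lie_def, single_mul_single_same]
  · simp [Ring.lie_def, single_mul_single_same]

end Matrix

section Parabolic

variable {n : ℕ}

theorem single_mem_parSub {i j : Fin (n + 1)} (hij : i ≠ j) (hj : j ≠ 0) (c : ℂ) :
    single i j c ∈ parSub n :=
  ⟨trace_single_eq_of_ne _ _ _ hij, fun _ _ => single_apply_of_col_ne _ _ hj _⟩

theorem single_mem_commutatorSpan {i j : Fin (n + 1)} (hij : i ≠ j) (hj : j ≠ 0) (c : ℂ) :
    single i j c ∈ commutatorSpan (parSub n) := by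
  have hdiff : single i i (1 : ℂ) - single j j 1 ∈ parSub n :=
    ⟨by simp, fun k hk => by simp only [Matrix.sub_apply, single_apply]; grind⟩
  have hlie := lie_mem_commutatorSpan hdiff (single_mem_parSub hij hj c)
  rw [lie_single_sub_single_single hij] at hlie
  simpa using Submodule.smul_mem _ (2 : ℂ)⁻¹ hlie

theorem single_sub_single_mem_commutatorSpan {i j : Fin (n + 1)} (hi : i ≠ 0) (hj : j ≠ 0)
    (c : ℂ) : single i i c - single j j c ∈ commutatorSpan (parSub n) := by
  by_cases hij : i = j
  · subst hij; simp
  · rw [← lie_single_single]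
    exact lie_mem_commutatorSpan (single_mem_parSub hij hj 1)
      (single_mem_parSub (Ne.symm hij) hi c)

theorem mem_commutatorSpan_of_offDiag {y : Matrix (Fin (n + 1)) (Fin (n + 1)) ℂ}
    (hdiag : ∀ i, y i i = 0) (hcol : ∀ i, i ≠ 0 → y i 0 = 0) :
    y ∈ commutatorSpan (parSub n) := by
  rw [matrix_eq_sum_single y]
  refine Submodule.sum_mem _ fun i _ => Submodule.sum_mem _ fun j _ => ?_
  by_cases hij : i = j
  · simp [hij, hdiag]
  by_cases hj : j = 0
  · simp [hj, hcol i (hj ▸ hij)]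
  exact single_mem_commutatorSpan hij hj _

theorem diagonal_mem_commutatorSpan {d : Fin (n + 1) → ℂ} (h0 : d 0 = 0)
    (hsum : ∑ i, d i = 0) : diagonal d ∈ commutatorSpan (parSub n) := by
  rw [Fin.sum_univ_succ, h0, zero_add] at hsum
  -- the pivot `1 : Fin (n + 1)` is nonzero whenever the sum below is nonempty
  have hd : diagonal d =
      ∑ a : Fin n, (single a.succ a.succ (d a.succ) - single 1 1 (d a.succ)) := by
    have hpivot : ∑ a : Fin n, single (1 : Fin (n + 1)) (1 : Fin (n + 1)) (d a.succ) = 0 := by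
      simpa [hsum] using (map_sum (singleAddMonoidHom (1 : Fin (n + 1)) (1 : Fin (n + 1)))
        (fun a : Fin n => d a.succ) Finset.univ).symm
    rw [Finset.sum_sub_distrib, hpivot, sub_zero, ← sum_single_eq_diagonal, Fin.sum_univ_succ, h0,
      single_zero, zero_add]
  rw [hd]
  refine Submodule.sum_mem _ fun a _ => ?_
  exact single_sub_single_mem_commutatorSpan (Fin.succ_ne_zero a)
    (by rw [Ne, Fin.one_eq_zero_iff]; have := a.pos; omega) _

theorem mem_commutatorSpan_of_mem_parSub {x : Matrix (Fin (n + 1)) (Fin (n + 1)) ℂ}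
    (hx : x ∈ parSub n) (h0 : x 0 0 = 0) : x ∈ commutatorSpan (parSub n) := by
  rw [← sub_add_cancel x (diagonal x.diag)]
  refine add_mem (mem_commutatorSpan_of_offDiag (by simp) fun i hi => ?_)
    (diagonal_mem_commutatorSpan h0 hx.1)
  simp [diagonal_apply_ne _ hi, hx.2 i hi]

end Parabolic

theorem stmt_15_general (n : ℕ)
    (𝔥 : Submodule ℂ (Matrix (Fin (n + 1)) (Fin (n + 1)) ℂ))
    (hle : 𝔥 ≤ parSub n)
    (hideal : ∀ x ∈ parSub n, ∀ y ∈ 𝔥, x * y - y * x ∈ 𝔥)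
    (hcodim : Module.finrank ℂ (parSub n) = Module.finrank ℂ 𝔥 + 1) :
    (𝔥 : Set (Matrix (Fin (n + 1)) (Fin (n + 1)) ℂ))
      = {x | x ∈ parSub n ∧ (x.submatrix Fin.succ Fin.succ).trace = 0} := by
  have hbracket : commutatorSpan (parSub n) ≤ 𝔥 :=
    commutatorSpan_le_of_finrank_eq_succ hle (fun x hx y hy => hideal x hx y hy) hcodim
  have hne : 𝔥 ≠ parSub n := by
    rintro rfl
    omega
  have heq := Submodule.eq_inf_ker_of_inf_ker_le (entryLinearMap ℂ ℂ 0 0) hle hne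
    fun x hx => hbracket (mem_commutatorSpan_of_mem_parSub hx.1 hx.2)
  ext x
  rw [heq]
  simp only [SetLike.mem_coe, Submodule.mem_inf, LinearMap.mem_ker, Set.mem_ofPred_eq,
    entryLinearMap_apply]
  refine and_congr_right fun hx => ?_
  have htrace := trace_eq_add_trace_submatrix_succ x
  rw [hx.1] at htrace
  constructor <;> intro h <;> linear_combination -htrace - h

/-- If `𝔥 ⊂ 𝔤` is a complex Lie subalgebra of complex codimension 1 that is an ideal of
`𝔤`, then `𝔥` is the subalgebra of those elements of `𝔤` whose lower-right block `α` is
traceless (`α ∈ 𝔰𝔩(n,ℂ)`). Here `n ≥ 2` is encoded as size `n + 1` with `1 ≤ n`. -/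
theorem stmt_15 (n : ℕ) (hn : 1 ≤ n)
    (𝔥 : Submodule ℂ (Matrix (Fin (n + 1)) (Fin (n + 1)) ℂ))
    (hle : 𝔥 ≤ parSub n)
    (hideal : ∀ x ∈ parSub n, ∀ y ∈ 𝔥, x * y - y * x ∈ 𝔥)
    (hcodim : Module.finrank ℂ (parSub n) = Module.finrank ℂ 𝔥 + 1) :
    (𝔥 : Set (Matrix (Fin (n + 1)) (Fin (n + 1)) ℂ))
      = {x | x ∈ parSub n ∧ (x.submatrix Fin.succ Fin.succ).trace = 0} :=
  stmt_15_general n 𝔥 hle hideal hcodim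
end
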